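/- Under the above setup, λ ∘ λ = k · Σ_I w(C_I)², where ∘ is the standard dot product on ℤ^c and the sum ranges over all (n+1)-element subsets I of Fin c. -/

import Mathlib

/-!
For `v ∈ ℤ^c`, Laplace expansion along the first row shows that `C_I ∘ v` is the minor of the
`(n+1) × c` matrix `[v; D]` on the columns `I`. If `D z = 0`, Cauchy–Binet applied to `[z; D]`
and `[e; D]ᵀ` (`e` a standard basis vector) then gives `Σ_I (C_I ∘ z) C_I = k z`, since
`[z; D] [e; D]ᵀ` is block triangular with diagonal blocks `z ∘ e` and `D Dᵀ`. Taking `z = C_J`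
and applying the linear form `w` yields `Σ_J (C_I ∘ C_J) w(C_J) = k w(C_I)`, and expanding
`λ ∘ λ` as a double sum gives the claim.
-/

open Matrix

/-- determinant of the square submatrix of `M` formed by the columns indexed by `I`
(in increasing order); junk value `0` if `I` does not have exactly `n` elements. -/
noncomputable def colsDet {n c : ℕ} (M : Matrix (Fin n) (Fin c) ℤ) (I : Finset (Fin c)) : ℤ :=
  if h : I.card = n then
    (M.submatrix id fun t => ((I.orderIsoOfFin h t : Fin c))).det
  else 0

/-- the cycle `C_I` attached to an `(n+1)`-element subset `I = {i₀ < … < i_n}` of column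
indices of `D`: its `i_j`-th entry is `(−1)^j · det(D restricted to the columns I ∖ {i_j})`
and its entries outside `I` vanish (junk value `0` if `I.card ≠ n+1`). -/
noncomputable def cyc {n c : ℕ} (D : Matrix (Fin n) (Fin c) ℤ) (I : Finset (Fin c)) :
    Fin c → ℤ := fun e =>
  if h : I.card = n + 1 ∧ e ∈ I then
    (-1) ^ ((((I.orderIsoOfFin h.1).symm ⟨e, h.2⟩ : Fin (n + 1)) : ℕ)) *
      colsDet D (I.erase e)
  else 0

/-- determinant of the square matrix whose first column is the coordinate vector of `z`
in the basis `Z'` of `ker B` and whose remaining columns are the coordinate vectors of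
the kernel elements `cols`.  With `cols` the columns of `∂₊` indexed by `J`, this is the
winding number `w(z)`; in the dual setting it is the cutting number. -/
noncomputable def detCoord {b c r : ℕ} {B : Matrix (Fin b) (Fin c) ℤ}
    (Z' : Module.Basis (Fin (r + 1)) ℤ (LinearMap.ker B.mulVecLin))
    (cols : Fin r → LinearMap.ker B.mulVecLin)
    (z : LinearMap.ker B.mulVecLin) : ℤ :=
  (Matrix.of fun i j =>
    Fin.cons (α := fun _ => ℤ) (Z'.repr z i) (fun t => Z'.repr (cols t) i) j).det

open Finset Set.powersetCard

namespace Matrix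

variable {R ι : Type*} [CommRing R] [Fintype ι]

theorem det_mul_eq_sum_pi {n : Type*} [Fintype n] [DecidableEq n] [DecidableEq ι]
    (A : Matrix n ι R) (B : Matrix ι n R) :
    (A * B).det = ∑ p : n → ι, (∏ i, B (p i) i) * (A.submatrix id p).det := by
  have hrows : (A * B)ᵀ = fun i => ∑ k, B k i • Aᵀ k := by
    ext i j
    simp [mul_apply, mul_comm]
  rw [← det_transpose, hrows]
  refine (detRowAlternating (n := n) (R := R)).toMultilinearMap.map_sum (fun i k => B k i • Aᵀ k)
    |>.trans (sum_congr rfl fun p _ => ?_)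
  rw [MultilinearMap.map_smul_univ, smul_eq_mul, ← det_transpose]
  rfl

variable [LinearOrder ι]

theorem _root_.Finset.sum_injective_eq_sum_powersetCard_perm {M : Type*} [AddCommMonoid M]
    {m : ℕ} (g : (Fin m → ι) → M) :
    ∑ p with Function.Injective p, g p =
      ∑ s : Set.powersetCard ι m, ∑ σ : Equiv.Perm (Fin m), g (ofFinEmbEquiv.symm s ∘ σ) := by
  have hrange (s : Set.powersetCard ι m) (σ : Equiv.Perm (Fin m)) (x : ι) :
      x ∈ Set.range (ofFinEmbEquiv.symm s ∘ σ) ↔ x ∈ s := by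
    rw [EquivLike.range_comp, mem_range_ofFinEmbEquiv_symm_iff_mem]
  rw [← Fintype.sum_prod_type']
  symm
  refine sum_bij (fun x _ => ofFinEmbEquiv.symm x.1 ∘ x.2) ?_ ?_ ?_ fun _ _ => rfl
  · intro x _
    simpa using (ofFinEmbEquiv.symm x.1).injective.comp x.2.injective
  · rintro ⟨s, σ⟩ _ ⟨t, τ⟩ _ (hst : ofFinEmbEquiv.symm s ∘ σ = ofFinEmbEquiv.symm t ∘ τ)
    obtain rfl : s = t := SetLike.ext fun x => by rw [← hrange s σ, ← hrange t τ, hst]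
    obtain rfl : σ = τ := Equiv.ext fun i => (ofFinEmbEquiv.symm s).injective (congrFun hst i)
    rfl
  · intro p hp
    simp only [mem_filter, mem_univ, true_and] at hp
    set s := ofFinEmb m ι ⟨p, hp⟩
    have hmem (i : Fin m) : p i ∈ (s : Finset ι) := by simp [s]
    set σ : Fin m → Fin m := fun i => (Set.powersetCard.orderIsoOfFin s).symm ⟨p i, hmem i⟩
    have hσp (i : Fin m) : ofFinEmbEquiv.symm s (σ i) = p i :=
      congrArg Subtype.val ((Set.powersetCard.orderIsoOfFin s).apply_symm_apply _)
    have hσinj : Function.Injective σ := fun i j hij => hp (by rw [← hσp, hij, hσp])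
    exact ⟨(s, Equiv.ofBijective σ hσinj.bijective_of_finite), mem_univ _, funext hσp⟩

/-- The Cauchy–Binet formula. -/
theorem det_mul_eq_sum_powersetCard {m : ℕ} (A : Matrix (Fin m) ι R) (B : Matrix ι (Fin m) R) :
    (A * B).det = ∑ s : Set.powersetCard ι m,
      (A.submatrix id (ofFinEmbEquiv.symm s)).det *
        (B.submatrix (ofFinEmbEquiv.symm s) id).det := by
  classical
  rw [det_mul_eq_sum_pi, ← sum_filter_of_ne (p := Function.Injective) fun p _ hp => ?_,
    sum_injective_eq_sum_powersetCard_perm]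
  · refine sum_congr rfl fun s _ => ?_
    rw [det_apply (B.submatrix _ id), mul_sum]
    refine sum_congr rfl fun σ _ => ?_
    rw [show A.submatrix id (ofFinEmbEquiv.symm s ∘ σ) =
        (A.submatrix id (ofFinEmbEquiv.symm s)).submatrix id σ from rfl,
      det_permute', Units.smul_def, zsmul_eq_mul]
    simp only [submatrix_apply, Function.comp_apply, id_eq]
    ring
  · by_contra hinj
    obtain ⟨i, j, hij, hne⟩ : ∃ i j, p i = p j ∧ i ≠ j := by
      simpa [Function.Injective] using hinj
    exact hp (by rw [det_zero_of_column_eq hne fun k => by simp [hij], mul_zero])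

end Matrix

section cycles

variable {n c : ℕ} (D : Matrix (Fin n) (Fin c) ℤ) {I : Finset (Fin c)}

theorem colsDet_erase_orderEmbOfFin (h : I.card = n + 1) (j : Fin (n + 1)) :
    colsDet D (I.erase (I.orderEmbOfFin h j)) =
      (D.submatrix id (I.orderEmbOfFin h ∘ j.succAbove)).det := by
  have hcard : (I.erase (I.orderEmbOfFin h j)).card = n := by
    rw [card_erase_of_mem (I.orderEmbOfFin_mem h j), h, Nat.add_sub_cancel]
  have hmem (t : Fin n) : I.orderEmbOfFin h (j.succAbove t) ∈ I.erase (I.orderEmbOfFin h j) :=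
    mem_erase.mpr ⟨fun heq => Fin.succAbove_ne j t ((I.orderEmbOfFin h).injective heq),
      I.orderEmbOfFin_mem h _⟩
  have hsorted : (fun t => ((I.erase (I.orderEmbOfFin h j)).orderIsoOfFin hcard t : Fin c)) =
      I.orderEmbOfFin h ∘ j.succAbove :=
    (orderEmbOfFin_unique hcard hmem
      ((I.orderEmbOfFin h).strictMono.comp (Fin.strictMono_succAbove j))).symm
  rw [colsDet, dif_pos hcard, hsorted]

theorem cyc_orderEmbOfFin (h : I.card = n + 1) (j : Fin (n + 1)) :
    cyc D I (I.orderEmbOfFin h j) =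
      (-1) ^ (j : ℕ) * (D.submatrix id (I.orderEmbOfFin h ∘ j.succAbove)).det := by
  rw [cyc, dif_pos ⟨h, I.orderEmbOfFin_mem h j⟩, ← colsDet_erase_orderEmbOfFin,
    show (I.orderIsoOfFin h).symm ⟨_, I.orderEmbOfFin_mem h j⟩ = j from
      (I.orderIsoOfFin h).symm_apply_apply j]

theorem cyc_dotProduct (h : I.card = n + 1) (v : Fin c → ℤ) :
    cyc D I ⬝ᵥ v = ((of (Fin.cons v fun i => D i)).submatrix id (I.orderEmbOfFin h)).det := by
  have hsupp : cyc D I ⬝ᵥ v = ∑ e ∈ I, cyc D I e * v e :=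
    (sum_subset I.subset_univ fun e _ he => by rw [cyc, dif_neg (by tauto), zero_mul]).symm
  rw [hsupp, ← sum_coe_sort, ← (I.orderIsoOfFin h).toEquiv.sum_comp, det_succ_row_zero]
  refine sum_congr rfl fun j _ => ?_
  have hminor : ((of (Fin.cons v fun i => D i)).submatrix id (I.orderEmbOfFin h)).submatrix
      Fin.succ j.succAbove = D.submatrix id (I.orderEmbOfFin h ∘ j.succAbove) := by
    ext
    simp
  rw [RelIso.coe_fn_toEquiv, coe_orderIsoOfFin_apply, cyc_orderEmbOfFin, hminor]
  simp only [submatrix_apply, id_eq, of_apply, Fin.cons_zero]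
  ring

theorem mulVec_cyc_eq_zero : D *ᵥ cyc D I = 0 := by
  by_cases h : I.card = n + 1
  · funext l
    rw [mulVec, Pi.zero_apply, dotProduct_comm, cyc_dotProduct D h]
    exact det_zero_of_row_eq (Fin.succ_ne_zero l).symm (by ext; simp)
  · have hzero : cyc D I = 0 := funext fun e => by rw [cyc, dif_neg (by tauto)]; rfl
    rw [hzero, mulVec_zero]

theorem det_cons_mul_transpose_cons_single {z : Fin c → ℤ} (hz : D *ᵥ z = 0) (e : Fin c) :
    (of (Fin.cons z fun i => D i) * (of (Fin.cons (Pi.single e 1) fun i => D i))ᵀ).det =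
      (D * Dᵀ).det * z e := by
  rw [det_succ_row_zero, Fin.sum_univ_succ, sum_eq_zero fun l _ => ?_]
  · have hminor : (of (Fin.cons z fun i => D i) *
        (of (Fin.cons (Pi.single e 1) fun i => D i))ᵀ).submatrix Fin.succ Fin.succ = D * Dᵀ := by
      ext
      simp [mul_apply]
    rw [Fin.succAbove_zero, hminor]
    simp [mul_apply, Pi.single_apply, mul_comm]
  · have hzl := congrFun hz l
    simp only [mulVec, dotProduct, Pi.zero_apply] at hzl
    simp [mul_apply, mul_comm, hzl]

theorem sum_dotProduct_cyc_smul_cyc {z : Fin c → ℤ} (hz : D *ᵥ z = 0) :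
    ∑ I ∈ powersetCard (n + 1) univ, (cyc D I ⬝ᵥ z) • cyc D I = (D * Dᵀ).det • z := by
  ext e
  calc (∑ I ∈ powersetCard (n + 1) univ, (cyc D I ⬝ᵥ z) • cyc D I) e
      = ∑ I ∈ powersetCard (n + 1) univ, (cyc D I ⬝ᵥ z) * (cyc D I ⬝ᵥ Pi.single e 1) := by
        simp [Finset.sum_apply, dotProduct_single]
    _ = ∑ s : Set.powersetCard (Fin c) (n + 1),
          (cyc D s ⬝ᵥ z) * (cyc D s ⬝ᵥ Pi.single e 1) :=
        sum_subtype _ (fun I => by simp) _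
    _ = (of (Fin.cons z fun i => D i) * (of (Fin.cons (Pi.single e 1) fun i => D i))ᵀ).det := by
        rw [det_mul_eq_sum_powersetCard]
        refine sum_congr rfl fun s _ => ?_
        rw [cyc_dotProduct D s.2, cyc_dotProduct D s.2]
        congr 1
        rw [← det_transpose, transpose_submatrix]
        rfl
    _ = ((D * Dᵀ).det • z) e := by
        rw [det_cons_mul_transpose_cons_single D hz, Pi.smul_apply, smul_eq_mul]

end cycles

section detCoord

variable {b c r : ℕ} {B : Matrix (Fin b) (Fin c) ℤ}
  (Z' : Module.Basis (Fin (r + 1)) ℤ (LinearMap.ker B.mulVecLin))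
  (cols : Fin r → LinearMap.ker B.mulVecLin)

theorem detCoord_eq_detRowAlternating (z : LinearMap.ker B.mulVecLin) :
    detCoord Z' cols z =
      detRowAlternating (Fin.cons (Z'.repr z) fun t => Z'.repr (cols t) : Matrix _ _ ℤ) := by
  rw [detCoord, ← det_transpose]
  congr 1
  ext i j
  refine Fin.cases ?_ (fun t => ?_) i <;> simp

@[simps]
noncomputable def detCoordLinearMap : LinearMap.ker B.mulVecLin →ₗ[ℤ] ℤ where
  toFun := detCoord Z' cols
  map_add' x y := by
    simp only [detCoord_eq_detRowAlternating, map_add, Finsupp.coe_add]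
    exact detRowAlternating.toMultilinearMap.cons_add _ _ _
  map_smul' a x := by
    simp only [detCoord_eq_detRowAlternating, map_smul, Finsupp.coe_smul]
    exact detRowAlternating.toMultilinearMap.cons_smul _ _ _

end detCoord

theorem sum_smul_dotProduct_self_eq_mul_sum_sq {R κ ι : Type*} [CommRing R] [Fintype κ]
    {p : Submodule R (κ → R)} (f : p →ₗ[R] R) (s : Finset ι) (C : ι → p) (k : R)
    (hC : ∀ I ∈ s, ∑ J ∈ s, ((C J : κ → R) ⬝ᵥ C I) • (C J : κ → R) = k • (C I : κ → R)) :
    (∑ I ∈ s, f (C I) • (C I : κ → R)) ⬝ᵥ (∑ I ∈ s, f (C I) • (C I : κ → R)) =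
      k * ∑ I ∈ s, f (C I) ^ 2 := by
  have hf (I) (hI : I ∈ s) : ∑ J ∈ s, ((C J : κ → R) ⬝ᵥ C I) * f (C J) = k * f (C I) := by
    have hframe : ∑ J ∈ s, ((C J : κ → R) ⬝ᵥ C I) • C J = k • C I :=
      Subtype.ext (by simpa using hC I hI)
    simpa using congrArg f hframe
  calc _ = ∑ I ∈ s, f (C I) * ∑ J ∈ s, ((C J : κ → R) ⬝ᵥ C I) * f (C J) := by
          simp only [sum_dotProduct, dotProduct_sum, smul_dotProduct, dotProduct_smul,
            smul_eq_mul, mul_sum]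
          exact sum_congr rfl fun I _ => sum_congr rfl fun J _ => by
            rw [dotProduct_comm]
            ring
    _ = k * ∑ I ∈ s, f (C I) ^ 2 := by
          rw [mul_sum]
          exact sum_congr rfl fun I hI => by rw [hf I hI]; ring

theorem harmonic_cycle_norm_eq_treeNumber_mul_sum_sq_winding_general
    -- chain complex of free abelian groups around degree i
    (b c : ℕ)
    (B : Matrix (Fin b) (Fin c) ℤ)
    -- `Z` is a ℤ-basis of `Z₁ = ker ∂₋`, of rank n, and `D = [∂]_Z` is the matrix of
    -- coordinates of the columns of `∂` in the basis `Z`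
    (n : ℕ)
    (D : Matrix (Fin n) (Fin c) ℤ)
    -- `Z'` is a ℤ-basis of `Z₂ = ker ∂`, of rank r + 1
    (r : ℕ) (Z' : Module.Basis (Fin (r + 1)) ℤ (LinearMap.ker B.mulVecLin))
    -- `J` picks r columns of `∂₊` whose ℚ-span is the full column space of `∂₊`;
    -- `Jcol` are these columns as elements of `Z₂`
    (Jcol : Fin r → LinearMap.ker B.mulVecLin)
    -- the cycles `C_I` as elements of `Z₂`
    (CI : Finset (Fin c) → LinearMap.ker B.mulVecLin)
    (hCI : ∀ I, (CI I : Fin c → ℤ) = cyc D I)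
     :
    (∑ I ∈ Finset.powersetCard (n + 1) (Finset.univ : Finset (Fin c)),
        detCoord Z' Jcol (CI I) • cyc D I) ⬝ᵥ
      (∑ I ∈ Finset.powersetCard (n + 1) (Finset.univ : Finset (Fin c)),
        detCoord Z' Jcol (CI I) • cyc D I)
      = (D * Dᵀ).det *
        ∑ I ∈ Finset.powersetCard (n + 1) (Finset.univ : Finset (Fin c)),
          (detCoord Z' Jcol (CI I)) ^ 2 := by
  have hframe : ∀ I ∈ powersetCard (n + 1) univ, ∑ J ∈ powersetCard (n + 1) univ,
      ((CI J : Fin c → ℤ) ⬝ᵥ CI I) • (CI J : Fin c → ℤ) = (D * Dᵀ).det • (CI I : Fin c → ℤ) :=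
    fun I _ => by simpa only [hCI] using sum_dotProduct_cyc_smul_cyc D (mulVec_cyc_eq_zero D)
  simpa only [hCI, detCoordLinearMap_apply] using
    sum_smul_dotProduct_self_eq_mul_sum_sq (detCoordLinearMap Z' Jcol) _ CI _ hframe

/-- `λ ∘ λ = k · Σ_I w(C_I)²`, where `λ = Σ_I w(C_I) • C_I` is the standard harmonic
cycle, `k = det([∂]_Z [∂]_Zᵀ)` is the tree number, and the sum ranges over all
`(n+1)`-element subsets `I` of `Fin c`. -/
theorem harmonic_cycle_norm_eq_treeNumber_mul_sum_sq_winding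
    -- chain complex of free abelian groups around degree i
    (a b c d : ℕ) (ha : 0 < a) (hb : 0 < b) (hc : 0 < c) (hd : 0 < d)
    (Bm : Matrix (Fin a) (Fin b) ℤ) (B : Matrix (Fin b) (Fin c) ℤ)
    (Bp : Matrix (Fin c) (Fin d) ℤ)
    (h1 : Bm * B = 0) (h2 : B * Bp = 0)
    -- `Z` is a ℤ-basis of `Z₁ = ker ∂₋`, of rank n, and `D = [∂]_Z` is the matrix of
    -- coordinates of the columns of `∂` in the basis `Z`
    (n : ℕ) (Z : Module.Basis (Fin n) ℤ (LinearMap.ker Bm.mulVecLin))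
    (D : Matrix (Fin n) (Fin c) ℤ)
    (hD : ∀ j i, B i j = ∑ l, D l j * (Z l : Fin b → ℤ) i)
    -- `rk H̃_{i−1}(X) = 0` and `rk H̃_i(X) = 1`
    (hrkB : (B.map (Int.cast : ℤ → ℚ)).rank = n)
    (hker : Module.finrank ℚ (LinearMap.ker (B.map (Int.cast : ℤ → ℚ)).mulVecLin)
      = (Bp.map (Int.cast : ℤ → ℚ)).rank + 1)
    -- `Z'` is a ℤ-basis of `Z₂ = ker ∂`, of rank r + 1
    (r : ℕ) (Z' : Module.Basis (Fin (r + 1)) ℤ (LinearMap.ker B.mulVecLin))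
    -- `J` picks r columns of `∂₊` whose ℚ-span is the full column space of `∂₊`;
    -- `Jcol` are these columns as elements of `Z₂`
    (J : Fin r → Fin d) (hJinj : Function.Injective J)
    (Jcol : Fin r → LinearMap.ker B.mulVecLin)
    (hJcol : ∀ t, (Jcol t : Fin c → ℤ) = fun i => Bp i (J t))
    (hJspan : Submodule.span ℚ (Set.range fun t => fun i => (Bp i (J t) : ℚ))
      = Submodule.span ℚ (Set.range fun j => fun i => (Bp i j : ℚ)))
    -- the cycles `C_I` as elements of `Z₂`
    (CI : Finset (Fin c) → LinearMap.ker B.mulVecLin)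
    (hCI : ∀ I, (CI I : Fin c → ℤ) = cyc D I)
     :
    (∑ I ∈ Finset.powersetCard (n + 1) (Finset.univ : Finset (Fin c)),
        detCoord Z' Jcol (CI I) • cyc D I) ⬝ᵥ
      (∑ I ∈ Finset.powersetCard (n + 1) (Finset.univ : Finset (Fin c)),
        detCoord Z' Jcol (CI I) • cyc D I)
      = (D * Dᵀ).det *
        ∑ I ∈ Finset.powersetCard (n + 1) (Finset.univ : Finset (Fin c)),
          (detCoord Z' Jcol (CI I)) ^ 2 :=
  harmonic_cycle_norm_eq_treeNumber_mul_sum_sq_winding_general b c B n D r Z' Jcol CI hCI
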